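/- Let g be an n-variable Boolean function, b ∈ F_2, and let g_b be the (n+1)-variable Boolean function g_b(X_{n+1}, X_n, …, X_1) = (1 ⊕ X_{n+1})·g(X_n, …, X_1) ⊕ X_{n+1}·(b ⊕ g(1⊕X_n, …, 1⊕X_1)). Then H_∞(g_b) = H_∞(g). -/
import Mathlib


open Finset

/-- Interpret a bit as a natural number. -/
def b2n (b : Bool) : ℕ := if b then 1 else 0

/-- Hamming weight of a vector in `F_2^ι`. -/
def bwt {ι : Type*} [Fintype ι] (α : ι → Bool) : ℕ :=
  (Finset.univ.filter fun i => α i = true).card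

/-- Inner product `⟨v,w⟩ = v_1 w_1 ⊕ ⋯ ⊕ v_n w_n` over `F_2`. -/
def bip {ι : Type*} [Fintype ι] (v w : ι → Bool) : Bool :=
  decide ((∑ i, b2n (v i && w i)) % 2 = 1)

/-- Normalised Walsh transform of a Boolean function:
`W_f(α) = 2^{-n} Σ_x (-1)^{f(x) ⊕ ⟨x,α⟩}`. -/
noncomputable def walsh {ι : Type*} [Fintype ι] [DecidableEq ι]
    (f : (ι → Bool) → Bool) (α : ι → Bool) : ℝ :=
  (2 ^ Fintype.card ι : ℝ)⁻¹ *
    ∑ x : ι → Bool, (-1 : ℝ) ^ (b2n (f x) + ∑ i, b2n (x i && α i))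

/-- Fourier min-entropy `H_∞(f) = min_{α : W_f(α) ≠ 0} log₂ (1 / W_f(α)²)`. -/
noncomputable def minEntropy {ι : Type*} [Fintype ι] [DecidableEq ι]
    (f : (ι → Bool) → Bool) : ℝ :=
  sInf {y : ℝ | ∃ α : ι → Bool, walsh f α ≠ 0 ∧ y = Real.logb 2 (1 / (walsh f α) ^ 2)}

/-- Fourier entropy `H(f) = Σ_{α : W_f(α) ≠ 0} W_f(α)² log₂ (1 / W_f(α)²)`. -/
noncomputable def fourierEntropy {ι : Type*} [Fintype ι] [DecidableEq ι]
    (f : (ι → Bool) → Bool) : ℝ :=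
  ∑ α : ι → Bool,
    if walsh f α = 0 then 0
    else (walsh f α) ^ 2 * Real.logb 2 (1 / (walsh f α) ^ 2)

/-- Total influence `Inf(f) = Σ_i Pr_x [f(x) ≠ f(x ⊕ e_i)]`. -/
noncomputable def influence {ι : Type*} [Fintype ι] [DecidableEq ι]
    (f : (ι → Bool) → Bool) : ℝ :=
  ∑ i : ι,
    ((Finset.univ.filter fun x : ι → Bool =>
       f x ≠ f (Function.update x i (!x i))).card : ℝ) / 2 ^ Fintype.card ι

/-- `f` is balanced if `|supp(f)| = 2^{n-1}`. -/
def balanced {ι : Type*} [Fintype ι] [DecidableEq ι] (f : (ι → Bool) → Bool) : Prop :=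
  (Finset.univ.filter fun x : ι → Bool => f x = true).card = 2 ^ (Fintype.card ι - 1)

/-- Disjoint composition `(f ⋄ g)(x) = f(g(x^{(1)}), …, g(x^{(k)}))`, where the input in
`F_2^{k·l}` is viewed as `k` blocks of length `l`. -/
def disjComp {ι κ : Type*} (f : (ι → Bool) → Bool) (g : (κ → Bool) → Bool) :
    (ι × κ → Bool) → Bool :=
  fun x => f fun i => g fun j => x (i, j)

/-- The palindromic-type construction
`g_b(X_{n+1}, X_n, …, X_1) = (1 ⊕ X_{n+1})·g(X_n,…,X_1) ⊕ X_{n+1}·(b ⊕ g(1⊕X_n,…,1⊕X_1))`,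
where the extra variable `X_{n+1}` is placed at index `0`. -/
def palin {n : ℕ} (g : (Fin n → Bool) → Bool) (b : Bool) :
    (Fin (n + 1) → Bool) → Bool :=
  fun x => if x 0 = true then xor b (g fun i => !x i.succ) else g fun i => x i.succ

/-- `ε_b(g) = Σ_{α : wt(α) ≢ b (mod 2)} W_g(α)²`. -/
noncomputable def eps {n : ℕ} (g : (Fin n → Bool) → Bool) (b : Bool) : ℝ :=
  ∑ α ∈ Finset.univ.filter fun α : Fin n → Bool => ¬bwt α % 2 = b2n b, (walsh g α) ^ 2

/-- `f` is `t`-resilient if `W_f(α) = 0` whenever `wt(α) ≤ t`. -/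
def resilient {ι : Type*} [Fintype ι] [DecidableEq ι]
    (f : (ι → Bool) → Bool) (t : ℕ) : Prop :=
  ∀ α : ι → Bool, bwt α ≤ t → walsh f α = 0

/-- `f` is plateaued if its Walsh transform takes values in `{0, c, -c}` for some `c`. -/
def plateaued {ι : Type*} [Fintype ι] [DecidableEq ι] (f : (ι → Bool) → Bool) : Prop :=
  ∃ c : ℝ, ∀ α : ι → Bool, walsh f α = 0 ∨ walsh f α = c ∨ walsh f α = -c

/-- `a_i = max_{w : wt(w) = i} W_f(w)²`. -/
noncomputable def maxWsqAt {ι : Type*} [Fintype ι] [DecidableEq ι]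
    (f : (ι → Bool) → Bool) (i : ℕ) : ℝ :=
  sSup {z : ℝ | ∃ w : ι → Bool, bwt w = i ∧ z = (walsh f w) ^ 2}

/-- Index type for the O'Donnell–Tan recursion: `f_m` is a function of `l^{m+1}` variables. -/
def OTIndex (l : ℕ) : ℕ → Type
  | 0 => Fin l
  | m + 1 => Fin l × OTIndex l m

instance OTIndex.instFintype (l : ℕ) : (m : ℕ) → Fintype (OTIndex l m)
  | 0 => inferInstanceAs (Fintype (Fin l))
  | m + 1 => letI := OTIndex.instFintype l m
             inferInstanceAs (Fintype (Fin l × OTIndex l m))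

instance OTIndex.instDecidableEq (l : ℕ) : (m : ℕ) → DecidableEq (OTIndex l m)
  | 0 => inferInstanceAs (DecidableEq (Fin l))
  | m + 1 => letI := OTIndex.instDecidableEq l m
             inferInstanceAs (DecidableEq (Fin l × OTIndex l m))

/-- The O'Donnell–Tan recursion `f_0 = g`, `f_m = g ⋄ f_{m-1}`. -/
def OTfun {l : ℕ} (g : (Fin l → Bool) → Bool) : (m : ℕ) → (OTIndex l m → Bool) → Bool
  | 0 => g
  | m + 1 => disjComp g (OTfun g m)


section aux

lemma neg_one_pow_b2n_xor (u v : Bool) :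
    ((-1:ℝ)) ^ b2n (xor u v) = (-1) ^ b2n u * (-1) ^ b2n v := by
  cases u <;> cases v <;> simp [b2n]

lemma neg_one_pow_b2n_not_and (z β : Bool) :
    ((-1:ℝ)) ^ b2n (!z && β) = (-1) ^ b2n β * (-1) ^ b2n (z && β) := by
  cases z <;> cases β <;> simp [b2n]

lemma bwt_eq_sum {ι : Type*} [Fintype ι] (β : ι → Bool) : bwt β = ∑ i, b2n (β i) := by
  rw [bwt, Finset.card_filter]
  simp [b2n]

lemma sum_cons_split {n : ℕ} (F : (Fin (n+1) → Bool) → ℝ) :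
    ∑ x : Fin (n+1) → Bool, F x
      = (∑ y : Fin n → Bool, F (Fin.cons true y)) + ∑ y : Fin n → Bool, F (Fin.cons false y) := by
  rw [← Equiv.sum_comp (Fin.consEquiv fun _ => Bool) F, Fintype.sum_prod_type,
    Fintype.sum_bool]
  rfl

/-- The negation permutation on `Fin n → Bool`. -/
def negPerm (n : ℕ) : Equiv.Perm (Fin n → Bool) :=
  ⟨fun y i => !y i, fun y i => !y i,
   fun y => by funext i; simp, fun y => by funext i; simp⟩

lemma walsh_palin {n : ℕ} (g : (Fin n → Bool) → Bool) (b : Bool) (α : Fin (n+1) → Bool) :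
    walsh (palin g b) α =
      if (b2n b + b2n (α 0) + bwt (fun i : Fin n => α i.succ)) % 2 = 0
      then walsh g (fun i : Fin n => α i.succ) else 0 := by
  set β : Fin n → Bool := fun i : Fin n => α i.succ with hβ
  set s : ℝ := (-1) ^ (b2n b + b2n (α 0) + bwt β) with hs
  set T : ℝ := ∑ y : Fin n → Bool, (-1:ℝ) ^ (b2n (g y) + ∑ i, b2n (y i && β i)) with hT
  have hsum : ∑ x : Fin (n+1) → Bool,
      (-1:ℝ) ^ (b2n (palin g b x) + ∑ i, b2n (x i && α i)) = s * T + T := by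
    rw [sum_cons_split]
    congr 1
    · -- x₀ = true part equals s * T
      have step1 : ∀ y : Fin n → Bool,
          (-1:ℝ) ^ (b2n (palin g b (Fin.cons true y)) + ∑ i, b2n ((Fin.cons true y : Fin (n+1) → Bool) i && α i))
            = (-1:ℝ) ^ (b2n (xor b (g fun i => !y i)) + (b2n (α 0) + ∑ i, b2n (y i && β i))) := by
        intro y
        have h1 : palin g b (Fin.cons true y) = xor b (g fun i => !y i) := by
          simp only [palin, Fin.cons_zero]
          simp [Fin.cons_succ]
        have h2 : ∑ i, b2n ((Fin.cons true y : Fin (n+1) → Bool) i && α i)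
            = b2n (α 0) + ∑ i, b2n (y i && β i) := by
          rw [Fin.sum_univ_succ]
          simp [Fin.cons_succ, b2n, hβ]
        rw [h1, h2]
      rw [Finset.sum_congr rfl fun y _ => step1 y]
      have step2 : ∀ z : Fin n → Bool,
          (-1:ℝ) ^ (b2n (xor b (g fun i => !(negPerm n z) i))
              + (b2n (α 0) + ∑ i, b2n ((negPerm n z) i && β i)))
            = s * (-1:ℝ) ^ (b2n (g z) + ∑ i, b2n (z i && β i)) := by
        intro z
        have hg : (fun i => !(negPerm n z) i) = z := by
          funext i; simp [negPerm]
        have hz : ∀ i, (negPerm n z) i = !z i := fun i => rfl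
        rw [hg]
        calc (-1:ℝ) ^ (b2n (xor b (g z)) + (b2n (α 0) + ∑ i, b2n ((negPerm n z) i && β i)))
            = (-1) ^ b2n (xor b (g z)) *
                ((-1) ^ b2n (α 0) * ∏ i, (-1:ℝ) ^ b2n (!z i && β i)) := by
              rw [pow_add, pow_add, ← Finset.prod_pow_eq_pow_sum]
              exact congrArg _ (congrArg _ (Finset.prod_congr rfl fun i _ => by rw [hz i]))
          _ = ((-1) ^ b2n b * (-1) ^ b2n (g z)) *
                ((-1) ^ b2n (α 0) * ((-1) ^ bwt β * ∏ i, (-1:ℝ) ^ b2n (z i && β i))) := by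
              rw [neg_one_pow_b2n_xor]
              congr 2
              rw [Finset.prod_congr rfl fun i _ => neg_one_pow_b2n_not_and (z i) (β i),
                Finset.prod_mul_distrib, Finset.prod_pow_eq_pow_sum, ← bwt_eq_sum]
          _ = s * (-1:ℝ) ^ (b2n (g z) + ∑ i, b2n (z i && β i)) := by
              rw [hs, pow_add, pow_add, pow_add, ← Finset.prod_pow_eq_pow_sum]
              ring
      rw [← Equiv.sum_comp (negPerm n)
        (fun y => (-1:ℝ) ^ (b2n (xor b (g fun i => !y i)) + (b2n (α 0) + ∑ i, b2n (y i && β i))))]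
      rw [Finset.sum_congr rfl fun z _ => step2 z, ← Finset.mul_sum, hT]
    · -- x₀ = false part equals T
      rw [hT]
      refine Finset.sum_congr rfl fun y _ => ?_
      have h1 : palin g b (Fin.cons false y) = g y := by
        simp only [palin, Fin.cons_zero]
        simp [Fin.cons_succ]
      have h2 : ∑ i, b2n ((Fin.cons false y : Fin (n+1) → Bool) i && α i) = ∑ i, b2n (y i && β i) := by
        rw [Fin.sum_univ_succ]
        simp [Fin.cons_succ, b2n, hβ]
      rw [h1, h2]
  have hT' : walsh g β = (2 ^ n : ℝ)⁻¹ * T := by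
    simp [walsh, hT]
  rw [walsh]
  simp only [Fintype.card_fin]
  rw [hsum]
  rcases Nat.even_or_odd (b2n b + b2n (α 0) + bwt β) with he | ho
  · rw [if_pos (Nat.even_iff.mp he), hs, he.neg_one_pow, hT']
    rw [pow_succ]
    have h2 : (2:ℝ) ^ n ≠ 0 := by positivity
    field_simp
    ring
  · rw [if_neg (by rw [Nat.odd_iff.mp ho]; norm_num), hs, ho.neg_one_pow]
    ring

end aux

/-- The palindromic-type construction preserves min-entropy: `H_∞(g_b) = H_∞(g)`. -/
theorem stmt7 {n : ℕ} (g : (Fin n → Bool) → Bool) (b : Bool) :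
    minEntropy (palin g b) = minEntropy g := by
  unfold minEntropy
  congr 1
  ext y
  constructor
  · rintro ⟨α, hne, hy⟩
    have h := walsh_palin g b α
    by_cases hc : (b2n b + b2n (α 0) + bwt (fun i : Fin n => α i.succ)) % 2 = 0
    · rw [if_pos hc] at h
      exact ⟨fun i => α i.succ, by rw [← h]; exact hne, by rw [← h]; exact hy⟩
    · rw [if_neg hc] at h
      exact absurd h hne
  · rintro ⟨β, hne, hy⟩
    set a0 : Bool := decide ((b2n b + bwt β) % 2 = 1) with ha0
    set α : Fin (n+1) → Bool := Fin.cons a0 β with hα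
    refine ⟨α, ?_, ?_⟩ <;>
    · have hsucc : (fun i : Fin n => α i.succ) = β := by
        funext i; simp [hα, Fin.cons_succ]
      have hzero : α 0 = a0 := by simp [hα]
      have h := walsh_palin g b α
      rw [hsucc, hzero] at h
      have hcond : (b2n b + b2n a0 + bwt β) % 2 = 0 := by
        have hb : b2n a0 = (b2n b + bwt β) % 2 := by
          rw [ha0]
          set m := b2n b + bwt β with hm
          rcases Nat.mod_two_eq_zero_or_one m with h0 | h0 <;> simp [h0, b2n]
        omega
      rw [if_pos hcond] at h
      rw [h]
      assumption
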